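/- Let φ = (1+√5)/2 and for each positive integer n define c_{-4n} = 5^{-2n} ∑_{k=0, k≠2n}^{∞} binom(4n,k) (−1)^k / (φ^{−4n+2k} + (−1)^{k+1}). Then |c_{-4n}| < 3 for all n ≥ 1. -/
import Mathlib

private lemma den_bd (x ε : ℝ) (hε : |ε| = 1) (hx : 0 < x)
    (h : x ≤ 1/2 ∨ 2 ≤ x) : 1/2 ≤ |x + ε| := by
  rcases h with h | h
  · have h1 := abs_sub_abs_le_abs_sub ε (-x)
    rw [abs_neg, hε, abs_of_pos hx, sub_neg_eq_add] at h1
    calc (1:ℝ)/2 ≤ 1 - x := by linarith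
      _ ≤ |ε + x| := h1
      _ = |x + ε| := by rw [add_comm]
  · have h1 := abs_sub_abs_le_abs_sub x (-ε)
    rw [abs_neg, hε, abs_of_pos hx, sub_neg_eq_add] at h1
    linarith

/-- The constants
`c_{-4n} = 5^{-2n} ∑_{k≥0, k≠2n} binom(4n,k) (-1)^k / (φ^{-4n+2k} + (-1)^{k+1})`
satisfy `|c_{-4n}| < 3` for all `n ≥ 1`. -/
theorem stmt_7 (n : ℕ) (hn : 0 < n) :
    let φ : ℝ := (1 + Real.sqrt 5) / 2
    |(1 / (5 : ℝ) ^ (2 * n)) *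
        ∑' k : ℕ, if k = 2 * n then (0 : ℝ) else
          (Nat.choose (4 * n) k : ℝ) * (-1 : ℝ) ^ k /
            (φ ^ ((2 * k : ℤ) - 4 * n) + (-1 : ℝ) ^ (k + 1))| < 3 := by
  intro φ
  have hs5 : (2:ℝ) ≤ Real.sqrt 5 := by
    rw [show (2:ℝ) = Real.sqrt 4 by
      rw [show (4:ℝ) = 2^2 by norm_num, Real.sqrt_sq (by norm_num)]]
    exact Real.sqrt_le_sqrt (by norm_num)
  have hφ : (3/2 : ℝ) ≤ φ := by unfold φ; linarith
  have hφ1 : (1:ℝ) ≤ φ := by linarith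
  have hφ0 : (0:ℝ) < φ := by linarith
  set f : ℕ → ℝ := fun k => if k = 2 * n then (0 : ℝ) else
          (Nat.choose (4 * n) k : ℝ) * (-1 : ℝ) ^ k /
            (φ ^ ((2 * k : ℤ) - 4 * n) + (-1 : ℝ) ^ (k + 1)) with hf
  -- per-term bound
  have hbound : ∀ k, |f k| ≤ 2 * (Nat.choose (4 * n) k : ℝ) := by
    intro k
    rw [hf]
    by_cases hk : k = 2 * n
    · simp [hk]
    · simp only [if_neg hk]
      set d : ℝ := φ ^ ((2 * k : ℤ) - 4 * n) + (-1 : ℝ) ^ (k + 1) with hd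
      have hzpos : (0:ℝ) < φ ^ ((2 * k : ℤ) - 4 * n) := zpow_pos hφ0 _
      have hcase : φ ^ ((2 * k : ℤ) - 4 * n) ≤ 1/2 ∨ 2 ≤ φ ^ ((2 * k : ℤ) - 4 * n) := by
        have hφ2 : (2:ℝ) ≤ φ ^ (2:ℤ) := by
          rw [zpow_two]; nlinarith
        rcases lt_trichotomy ((2 * k : ℤ) - 4 * n) 0 with hm | hm | hm
        · left
          have hm2 : (2 * k : ℤ) - 4 * n ≤ -2 := by omega
          have h1 : φ ^ ((2 * k : ℤ) - 4 * n) ≤ φ ^ (-2 : ℤ) :=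
            zpow_le_zpow_right₀ hφ1 hm2
          have h2 : φ ^ (-2 : ℤ) ≤ 1/2 := by
            rw [zpow_neg]
            rw [inv_le_comm₀ (by positivity) (by norm_num)]
            linarith
          linarith
        · exfalso; omega
        · right
          have hm2 : (2 : ℤ) ≤ (2 * k : ℤ) - 4 * n := by omega
          have h1 : φ ^ (2:ℤ) ≤ φ ^ ((2 * k : ℤ) - 4 * n) :=
            zpow_le_zpow_right₀ hφ1 hm2
          linarith
      have hden : (1/2 : ℝ) ≤ |d| :=
        den_bd _ _ (by rw [abs_pow, abs_neg, abs_one, one_pow]) hzpos hcase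
      have hdpos : (0:ℝ) < |d| := by linarith
      rw [abs_div, abs_mul, abs_pow, abs_neg, abs_one, one_pow, mul_one,
        Nat.abs_cast]
      rw [div_le_iff₀ hdpos]
      nlinarith [Nat.cast_nonneg (α := ℝ) (Nat.choose (4 * n) k)]
  -- the tsum is a finite sum
  have hvanish : ∀ k ∉ Finset.range (4 * n + 1), f k = 0 := by
    intro k hk
    rw [Finset.mem_range, not_lt] at hk
    have hk2 : k ≠ 2 * n := by omega
    have : Nat.choose (4 * n) k = 0 := Nat.choose_eq_zero_of_lt (by omega)
    simp [hf, hk2, this]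
  have htsum : ∑' k, f k = ∑ k ∈ Finset.range (4 * n + 1), f k :=
    tsum_eq_sum hvanish
  rw [htsum, abs_mul]
  have hsum : |∑ k ∈ Finset.range (4 * n + 1), f k| ≤ 2 * 2 ^ (4 * n) := by
    calc |∑ k ∈ Finset.range (4 * n + 1), f k|
        ≤ ∑ k ∈ Finset.range (4 * n + 1), |f k| := Finset.abs_sum_le_sum_abs _ _
      _ ≤ ∑ k ∈ Finset.range (4 * n + 1), 2 * (Nat.choose (4 * n) k : ℝ) :=
          Finset.sum_le_sum fun k _ => hbound k
      _ = 2 * ∑ k ∈ Finset.range (4 * n + 1), (Nat.choose (4 * n) k : ℝ) := by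
          rw [Finset.mul_sum]
      _ = 2 * 2 ^ (4 * n) := by
          rw [← Nat.cast_sum]
          rw [Nat.sum_range_choose]
          push_cast; ring
  have h5 : |(1 / (5 : ℝ) ^ (2 * n))| = 1 / (25:ℝ) ^ n := by
    rw [abs_of_pos (by positivity)]
    rw [show (25:ℝ) = 5^2 by norm_num, ← pow_mul]
  rw [h5]
  have h16 : (2:ℝ) * 2 ^ (4 * n) = 2 * 16 ^ n := by
    rw [pow_mul]; norm_num
  calc 1 / (25:ℝ) ^ n * |∑ k ∈ Finset.range (4 * n + 1), f k|
      ≤ 1 / (25:ℝ) ^ n * (2 * 16 ^ n) := by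
        rw [← h16]; exact mul_le_mul_of_nonneg_left hsum (by positivity)
    _ < 3 := by
        rw [div_mul_eq_mul_div, one_mul, div_lt_iff₀ (by positivity)]
        have : (16:ℝ)^n ≤ 25^n := pow_le_pow_left₀ (by norm_num) (by norm_num) n
        nlinarith [pow_pos (show (0:ℝ) < 25 by norm_num) n]
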